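/- arXiv:1807.06914 — 2 statements merged into one kernel-verified Lean document; each statement's English description precedes it below -/
import Mathlib

section
/- Let G be a graph and S an independent set all of whose vertices are shedding vertices. Then there exists a maximal independent set U of G disjoint from S, together with a matching from S into U. -/
open SimpleGraph

variable {V : Type*} [Fintype V] [DecidableEq V]

/-- A set of vertices is independent: no two of its vertices are adjacent. -/
def isIndep (G : SimpleGraph V) (S : Finset V) : Prop :=
  ∀ ⦃a⦄, a ∈ S → ∀ ⦃b⦄, b ∈ S → ¬ G.Adj a b

/-- The independence number `α(G)`. -/
noncomputable def indepNum (G : SimpleGraph V) : ℕ :=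
  sSup {n | ∃ S : Finset V, isIndep G S ∧ S.card = n}

/-- A maximum independent set: an independent set of size `α(G)`. -/
def isMaxIndep (G : SimpleGraph V) (S : Finset V) : Prop :=
  isIndep G S ∧ S.card = _root_.indepNum G

/-- `G` has two disjoint maximum independent sets. -/
def hasTwoDisjointMaxIndep (G : SimpleGraph V) : Prop :=
  ∃ S₁ S₂ : Finset V, isMaxIndep G S₁ ∧ isMaxIndep G S₂ ∧ Disjoint S₁ S₂

/-- A matching: a set of edges of `G`, pairwise sharing no vertex. -/
def isMatchingF (G : SimpleGraph V) (M : Finset (Sym2 V)) : Prop :=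
  (∀ e ∈ M, e ∈ G.edgeSet) ∧
  (∀ e ∈ M, ∀ f ∈ M, e ≠ f → ∀ v : V, v ∈ e → v ∉ f)

/-- The matching number `μ(G)`. -/
noncomputable def matchNum (G : SimpleGraph V) : ℕ :=
  sSup {n | ∃ M : Finset (Sym2 V), isMatchingF G M ∧ M.card = n}

/-- A shedding vertex: for every independent set `S` of `G − N[v]` there is a
neighbor `u` of `v` with `S ∪ {u}` independent. -/
def IsShedding (G : SimpleGraph V) (v : V) : Prop :=
  ∀ S : Finset V, isIndep G S → (∀ w ∈ S, w ≠ v ∧ ¬ G.Adj v w) →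
    ∃ u, G.Adj v u ∧ isIndep G (insert u S)

/-- A perfect matching of `G`: a matching covering every vertex. -/
def hasPerfectMatchingF (G : SimpleGraph V) : Prop :=
  ∃ M : Finset (Sym2 V), isMatchingF G M ∧ ∀ v : V, ∃ e ∈ M, v ∈ e

/-- The disjoint union of `k` copies of `K₂`. -/
def copiesK2 (k : ℕ) : SimpleGraph (Fin k × Fin 2) :=
  SimpleGraph.fromRel (fun p q => p.1 = q.1)

section

variable {G : SimpleGraph V}

omit [Fintype V] [DecidableEq V] in
lemma isIndep.mono {S T : Finset V} (hT : isIndep G T) (hST : S ⊆ T) : isIndep G S :=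
  fun _ ha _ hb => hT (hST ha) (hST hb)

omit [Fintype V] [DecidableEq V] in
lemma isIndep.notMem_of_adj {T : Finset V} {v u : V} (hT : isIndep G T) (hv : v ∈ T)
    (hvu : G.Adj v u) : u ∉ T :=
  fun hu => hT hv hu hvu

omit [Fintype V] in
lemma IsShedding.exists_adj_isIndep_insert {v : V} {T : Finset V} (hv : IsShedding G v)
    (hvT : v ∉ T) (hT : isIndep G (insert v T)) :
    ∃ u, G.Adj v u ∧ isIndep G (insert u T) :=
  hv T (hT.mono (Finset.subset_insert v T)) fun _ hw =>
    ⟨fun hwv => hvT (hwv ▸ hw), hT (Finset.mem_insert_self v T) (Finset.mem_insert_of_mem hw)⟩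

/- The vertices of `S` are matched one at a time: shedding gives `v` a neighbour `u` extending the
independent set `W ∪ S` built so far, and `u` then joins `W`. It differs from the later choices
because those are adjacent to their partners in `S`, while `u` is not. -/
omit [Fintype V] in
lemma exists_injOn_adj_isIndep_union_image (S W : Finset V) (hshed : ∀ v ∈ S, IsShedding G v)
    (hWS : isIndep G (W ∪ S)) (hdisj : Disjoint W S) :
    ∃ f : V → V, Set.InjOn f S ∧ (∀ s ∈ S, G.Adj s (f s)) ∧ isIndep G (W ∪ S.image f) := by
  induction S using Finset.induction_on generalizing W with
  | empty => exact ⟨id, by simp, by simp, by simpa using hWS⟩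
  | @insert v S hvS ih =>
    rw [Finset.union_insert] at hWS
    have hvWS : v ∉ W ∪ S := by
      simpa [hvS] using Finset.disjoint_right.1 hdisj (Finset.mem_insert_self v S)
    obtain ⟨u, hvu, huWS⟩ :=
      (hshed v (Finset.mem_insert_self v S)).exists_adj_isIndep_insert hvWS hWS
    have huS : u ∉ S := fun hu =>
      hWS.notMem_of_adj (Finset.mem_insert_self v _) hvu (Finset.mem_insert_of_mem
        (Finset.mem_union_right W hu))
    obtain ⟨f, hinj, hadj, hind⟩ := ih (insert u W)
      (fun w hw => hshed w (Finset.mem_insert_of_mem hw))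
      (by rwa [Finset.insert_union])
      (Finset.disjoint_insert_left.2 ⟨huS, hdisj.mono_right (Finset.subset_insert v S)⟩)
    have hne : ∀ s ∈ S, s ≠ v := fun s hs h => hvS (h ▸ hs)
    have hfu : u ∉ f '' S := by
      rintro ⟨s, hs, rfl⟩
      exact (huWS.mono (Finset.insert_subset_insert _ Finset.subset_union_right)).notMem_of_adj
        (Finset.mem_insert_of_mem hs) (hadj s hs) (Finset.mem_insert_self _ S)
    refine ⟨Function.update f v u, ?_, ?_, ?_⟩
    · rw [Finset.coe_insert, Set.injOn_insert (by simpa using hvS), Function.update_self]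
      refine ⟨hinj.congr fun s hs => (Function.update_of_ne (hne s hs) u f).symm, ?_⟩
      rwa [Set.image_congr fun s hs => Function.update_of_ne (hne s hs) u f]
    · intro s hs
      rcases Finset.mem_insert.1 hs with rfl | hs
      · simpa using hvu
      · simpa [hne s hs] using hadj s hs
    · have himage : (insert v S).image (Function.update f v u) = insert u (S.image f) := by
        rw [Finset.image_insert, Function.update_self,
          Finset.image_congr fun s hs => Function.update_of_ne (hne s hs) u f]
      rwa [himage, Finset.union_insert, ← Finset.insert_union]

lemma isIndep.exists_superset_maximal {T : Finset V} (hT : isIndep G T) :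
    ∃ U, T ⊆ U ∧ isIndep G U ∧ ∀ v ∉ U, ¬ isIndep G (insert v U) := by
  obtain ⟨U, hTU, hU⟩ := (Set.toFinite {U : Finset V | isIndep G U}).exists_le_maximal hT
  exact ⟨U, hTU, hU.prop, fun v hv hvU => hv (hU.le_of_ge hvU (Finset.subset_insert v U)
    (Finset.mem_insert_self v U))⟩

end

/-- If `S` is an independent set of shedding vertices, then there is a maximal
independent set `U` disjoint from `S` and a matching from `S` into `U`. -/
theorem stmt6 (G : SimpleGraph V) (S : Finset V) (hS : isIndep G S)
    (hshed : ∀ v ∈ S, IsShedding G v) :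
    ∃ U : Finset V, isIndep G U ∧ (∀ v ∉ U, ¬ isIndep G (insert v U)) ∧
      Disjoint S U ∧
      ∃ f : V → V, Set.InjOn f ↑S ∧ ∀ s ∈ S, f s ∈ U ∧ G.Adj s (f s) := by
  obtain ⟨f, hinj, hadj, hind⟩ := exists_injOn_adj_isIndep_union_image S ∅ hshed
    (by rwa [Finset.empty_union]) (Finset.disjoint_empty_left S)
  rw [Finset.empty_union] at hind
  obtain ⟨U, hfU, hU, hmax⟩ := hind.exists_superset_maximal
  have hfU' : ∀ s ∈ S, f s ∈ U := fun s hs => hfU (Finset.mem_image_of_mem f hs)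
  refine ⟨U, hU, hmax, ?_, f, hinj, fun s hs => ⟨hfU' s hs, hadj s hs⟩⟩
  exact Finset.disjoint_left.2 fun s hsS hsU => hU hsU (hfU' s hsS) (hadj s hsS)
end

section
/- A König–Egerváry graph G has two disjoint maximum independent sets if and only if G is a bipartite graph possessing a perfect matching. -/
open SimpleGraph

variable {V : Type*} [Fintype V] [DecidableEq V]

/-!
Two disjoint maximum independent sets give `2α ≤ |V|`, and every matching gives `2μ ≤ |V|`;
under `α + μ = |V|` both are equalities, so the two sets are complementary (a bipartition) and a
maximum matching covers all `2μ = |V|` vertices. Conversely, a perfect matching forces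
`μ = |V|/2 = α`, and the two colour classes of a bipartition are independent sets of total size
`|V| = 2α`, hence each of size `α`.
-/

section

variable {α : Type*} {G : SimpleGraph α}

theorem isMatchingF.card_biUnion_toFinset [DecidableEq α] {M : Finset (Sym2 α)}
    (hM : isMatchingF G M) : (M.biUnion Sym2.toFinset).card = 2 * M.card := by
  rw [Finset.card_biUnion, Finset.sum_const_nat, mul_comm]
  · exact fun e he => Sym2.card_toFinset_of_not_isDiag e (G.not_isDiag_of_mem_edgeSet (hM.1 e he))
  · refine fun e he f hf hef => Finset.disjoint_left.mpr fun v hve hvf => ?_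
    exact hM.2 e he f hf hef v (Sym2.mem_toFinset.mp hve) (Sym2.mem_toFinset.mp hvf)

variable [Fintype α]

namespace isMatchingF

variable {M : Finset (Sym2 α)}

theorem two_mul_card_le (hM : isMatchingF G M) : 2 * M.card ≤ Fintype.card α := by
  classical
  exact hM.card_biUnion_toFinset ▸ Finset.card_le_univ _

theorem forall_mem_iff (hM : isMatchingF G M) :
    (∀ v : α, ∃ e ∈ M, v ∈ e) ↔ 2 * M.card = Fintype.card α := by
  classical
  rw [← hM.card_biUnion_toFinset, Finset.card_eq_iff_eq_univ, Finset.eq_univ_iff_forall]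
  simp only [Finset.mem_biUnion, Sym2.mem_toFinset]

end isMatchingF

theorem bddAbove_card_isMatchingF (G : SimpleGraph α) :
    BddAbove {n | ∃ M : Finset (Sym2 α), isMatchingF G M ∧ M.card = n} :=
  ⟨Fintype.card α, by rintro n ⟨M, hM, rfl⟩; have := hM.two_mul_card_le; omega⟩

theorem card_le_matchNum {M : Finset (Sym2 α)} (hM : isMatchingF G M) : M.card ≤ matchNum G :=
  le_csSup (bddAbove_card_isMatchingF G) ⟨M, hM, rfl⟩

theorem exists_isMatchingF_card_eq_matchNum (G : SimpleGraph α) :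
    ∃ M : Finset (Sym2 α), isMatchingF G M ∧ M.card = matchNum G :=
  Nat.sSup_mem (s := {n | ∃ M : Finset (Sym2 α), isMatchingF G M ∧ M.card = n})
    ⟨0, ∅, ⟨by simp, by simp⟩, rfl⟩ (bddAbove_card_isMatchingF G)

theorem two_mul_matchNum_le (G : SimpleGraph α) : 2 * matchNum G ≤ Fintype.card α := by
  obtain ⟨M, hM, hMcard⟩ := exists_isMatchingF_card_eq_matchNum G
  exact hMcard ▸ hM.two_mul_card_le

theorem hasPerfectMatchingF_iff : hasPerfectMatchingF G ↔ 2 * matchNum G = Fintype.card α := by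
  constructor
  · rintro ⟨M, hM, hcover⟩
    have := card_le_matchNum hM
    have := two_mul_matchNum_le G
    have := hM.forall_mem_iff.mp hcover
    omega
  · intro hμ
    obtain ⟨M, hM, hMcard⟩ := exists_isMatchingF_card_eq_matchNum G
    exact ⟨M, hM, hM.forall_mem_iff.mpr (hMcard ▸ hμ)⟩

theorem card_le_indepNum {S : Finset α} (hS : isIndep G S) : S.card ≤ _root_.indepNum G :=
  le_csSup ⟨Fintype.card α, by rintro n ⟨T, -, rfl⟩; exact T.card_le_univ⟩ ⟨S, hS, rfl⟩

variable [DecidableEq α]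

theorem colorable_two_iff_exists_isIndep_compl :
    G.Colorable 2 ↔ ∃ S : Finset α, isIndep G S ∧ isIndep G Sᶜ := by
  classical
  constructor
  · intro hG
    obtain ⟨s, t, hst⟩ := IsBipartite.exists_isBipartiteWith hG
    refine ⟨s.toFinset, fun a ha b hb hab => ?_, fun a ha b hb hab => ?_⟩
    · rw [Set.mem_toFinset] at ha hb
      exact Set.disjoint_left.mp hst.disjoint hb (hst.mem_of_mem_adj ha hab)
    · simp only [Finset.mem_compl, Set.mem_toFinset] at ha hb
      rcases hst.mem_of_adj hab with ⟨has, -⟩ | ⟨-, hbs⟩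
      exacts [ha has, hb hbs]
  · rintro ⟨S, hS, hSc⟩
    refine IsBipartiteWith.isBipartite (s := ↑S) (t := ↑Sᶜ)
      ⟨by simpa using disjoint_compl_right, fun a b hab => ?_⟩
    simp only [Finset.coe_compl, Set.mem_compl_iff, Finset.mem_coe]
    by_cases ha : a ∈ S <;> by_cases hb : b ∈ S
    · exact absurd hab (hS ha hb)
    · exact .inl ⟨ha, hb⟩
    · exact .inr ⟨ha, hb⟩
    · exact absurd hab (hSc (Finset.mem_compl.mpr ha) (Finset.mem_compl.mpr hb))

theorem exists_isMaxIndep_compl_iff :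
    (∃ S : Finset α, isMaxIndep G S ∧ isMaxIndep G Sᶜ) ↔
      G.Colorable 2 ∧ 2 * _root_.indepNum G = Fintype.card α := by
  rw [colorable_two_iff_exists_isIndep_compl]
  constructor
  · rintro ⟨S, ⟨hS, hScard⟩, hSc, hSccard⟩
    refine ⟨⟨S, hS, hSc⟩, ?_⟩
    have := Finset.card_add_card_compl S
    omega
  · rintro ⟨⟨S, hS, hSc⟩, hα⟩
    have := Finset.card_add_card_compl S
    have := card_le_indepNum hS
    have := card_le_indepNum hSc
    exact ⟨S, ⟨hS, by omega⟩, hSc, by omega⟩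

theorem hasTwoDisjointMaxIndep_iff_exists_isMaxIndep_compl
    (hα : Fintype.card α ≤ 2 * _root_.indepNum G) :
    hasTwoDisjointMaxIndep G ↔ ∃ S : Finset α, isMaxIndep G S ∧ isMaxIndep G Sᶜ := by
  constructor
  · rintro ⟨S, T, hS, hT, hST⟩
    suffices T = Sᶜ from ⟨S, hS, this ▸ hT⟩
    refine Finset.eq_of_subset_of_card_le (Finset.subset_compl_iff_disjoint_left.mpr hST) ?_
    rw [Finset.card_compl, hS.2, hT.2]
    omega
  · rintro ⟨S, hS, hSc⟩
    exact ⟨S, Sᶜ, hS, hSc, disjoint_compl_right⟩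

end

/-- A König–Egerváry graph has two disjoint maximum independent sets iff it is
bipartite with a perfect matching. -/
theorem stmt11 (G : SimpleGraph V)
    (hKE : _root_.indepNum G + matchNum G = Fintype.card V) :
    hasTwoDisjointMaxIndep G ↔ (G.Colorable 2 ∧ hasPerfectMatchingF G) := by
  have hμ := two_mul_matchNum_le G
  rw [hasTwoDisjointMaxIndep_iff_exists_isMaxIndep_compl (by omega), exists_isMaxIndep_compl_iff,
    hasPerfectMatchingF_iff]
  exact and_congr_right fun _ => by omega
end
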